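/- arXiv:1710.10563 — 3 statements merged into one kernel-verified Lean document; each statement's English description precedes it below -/
import Mathlib

section
/- For a positive integer N, the set Γ₀(N) of matrices (a b; c d) in SL₂(ℤ) with N ∣ c is a subgroup of SL₂(ℤ), and its index in SL₂(ℤ) equals N · ∏_{p ∣ N} (1 + 1/p), the product running over the distinct primes dividing N. -/
/-!
Let `SL(2, ℤ)` act on `(ℤ/N)²` by reducing mod `N` and multiplying column vectors. The orbit of
`(1, 0)` is the set of primitive vectors, i.e. the coprime pairs: such a pair lifts to a coprime
pair of integers, which is the first column of a matrix in `SL(2, ℤ)`. The stabilizer of `(1, 0)`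
is `Γ₁(N)`, which is the kernel of the surjection `Γ₀(N) → (ℤ/N)ˣ` taking the lower right entry.
Hence `φ(N) · [SL(2, ℤ) : Γ₀(N)]` is the number of primitive pairs mod `N`. By the Chinese remainder
theorem this number is multiplicative in `N`, and since `ℤ/pᵏ` is a local ring, a pair there is
primitive unless both entries lie in the maximal ideal, which has `pᵏ⁻¹` elements; so it equals
`N² ∏_{p ∣ N} (1 - p⁻²)`. Dividing by `φ(N) = N ∏_{p ∣ N} (1 - p⁻¹)` gives the index.
-/

open CongruenceSubgroup MatrixGroups

theorem Prod.isCoprime_iff {R S : Type*} [CommSemiring R] [CommSemiring S] {a b : R × S} :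
    IsCoprime a b ↔ IsCoprime a.1 b.1 ∧ IsCoprime a.2 b.2 := by
  constructor
  · rintro ⟨x, y, h⟩
    exact ⟨⟨x.1, y.1, congrArg Prod.fst h⟩, ⟨x.2, y.2, congrArg Prod.snd h⟩⟩
  · rintro ⟨⟨x₁, y₁, h₁⟩, ⟨x₂, y₂, h₂⟩⟩
    exact ⟨(x₁, x₂), (y₁, y₂), Prod.ext h₁ h₂⟩

theorem RingEquiv.isCoprime_map_iff {R S : Type*} [CommSemiring R] [CommSemiring S]
    (e : R ≃+* S) {a b : R} : IsCoprime (e a) (e b) ↔ IsCoprime a b :=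
  ⟨fun h => by simpa using h.map e.symm.toRingHom, fun h => h.map e.toRingHom⟩

theorem IsLocalRing.isCoprime_iff {R : Type*} [CommRing R] [IsLocalRing R] {a b : R} :
    IsCoprime a b ↔ IsUnit a ∨ IsUnit b := by
  constructor
  · rintro ⟨x, y, h⟩
    exact (isUnit_or_isUnit_of_add_one h).imp isUnit_of_mul_isUnit_right
      isUnit_of_mul_isUnit_right
  · rintro (⟨u, rfl⟩ | ⟨u, rfl⟩)
    · exact ⟨↑u⁻¹, 0, by simp⟩
    · exact ⟨0, ↑u⁻¹, by simp⟩

theorem card_nonunits_add_card_units {M : Type*} [Monoid M] [Finite M] :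
    Nat.card (nonunits M) + Nat.card Mˣ = Nat.card M := by
  rw [Nat.card_congr Submonoid.unitsTypeEquivIsUnitSubmonoid.toEquiv, add_comm]
  exact Set.ncard_add_ncard_compl (IsUnit.submonoid M : Set M)

namespace ZMod

instance isLocalRing_prime_pow {p : ℕ} [Fact p.Prime] {k : ℕ} [NeZero k] :
    IsLocalRing (ZMod (p ^ k)) :=
  have : Nontrivial (ZMod (p ^ k)) :=
    nontrivial_iff.2 (Nat.one_lt_pow (NeZero.ne k) (Fact.out : p.Prime).one_lt).ne'
  IsLocalRing.of_surjective' (PadicInt.toZModPow k) fun x => ⟨x.val, by simp⟩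

theorem card_nonunits_prime_pow {p k : ℕ} (hp : p.Prime) (hk : k ≠ 0) :
    Nat.card (nonunits (ZMod (p ^ k))) = p ^ (k - 1) := by
  have : NeZero (p ^ k) := ⟨pow_ne_zero k hp.ne_zero⟩
  have hsum := card_nonunits_add_card_units (M := ZMod (p ^ k))
  rw [Nat.card_eq_fintype_card (α := (ZMod (p ^ k))ˣ), card_units_eq_totient,
    Nat.totient_prime_pow hp (Nat.pos_of_ne_zero hk), Nat.card_zmod] at hsum
  have hpk : p ^ k = p ^ (k - 1) + p ^ (k - 1) * (p - 1) := by
    rw [Nat.mul_sub_one, Nat.add_sub_cancel' (Nat.le_mul_of_pos_right _ hp.pos), ← pow_succ,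
      Nat.sub_add_cancel (Nat.one_le_iff_ne_zero.2 hk)]
  omega

theorem exists_isCoprime_intCast_eq {N : ℕ} [NeZero N] {c d : ZMod N} (h : IsCoprime c d) :
    ∃ a b : ℤ, IsCoprime a b ∧ (a : ZMod N) = c ∧ (b : ZMod N) = d := by
  -- Modulo `g = gcd(a, N)` the pair becomes `(0, d)`, so `d` is a unit mod `g`; lift it to a unit
  -- mod `a` and glue that with `d` mod `N` by the Chinese remainder theorem.
  set a := c.val + N
  have ha : (a : ZMod N) = c := by simp [a]
  have : NeZero a := ⟨by have := NeZero.ne N; omega⟩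
  set g := a.gcd N
  have hd : IsUnit (d.val : ZMod g) := by
    have := h.map (castHom (Nat.gcd_dvd_right a N) (ZMod g))
    rwa [← ha, ← natCast_zmod_val d, map_natCast, map_natCast,
      (natCast_eq_zero_iff a g).2 (Nat.gcd_dvd_left a N), isCoprime_zero_left] at this
  obtain ⟨u, hu⟩ := unitsMap_surjective (Nat.gcd_dvd_left a N) hd.unit
  have hug : (u : ZMod a).val ≡ d.val [MOD g] := by
    rw [← natCast_eq_natCast_iff, ← cast_eq_val, ← unitsMap_val (Nat.gcd_dvd_left a N), hu,
      IsUnit.unit_spec]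
  obtain ⟨b, hba, hbN⟩ := Nat.chineseRemainder' hug
  refine ⟨a, b, ?_, by exact_mod_cast ha, ?_⟩
  · rw [Nat.isCoprime_iff_coprime, Nat.coprime_comm, ← isUnit_iff_coprime b a,
      (natCast_eq_natCast_iff _ _ _).2 hba, natCast_zmod_val]
    exact u.isUnit
  · rw [Int.cast_natCast, (natCast_eq_natCast_iff _ _ _).2 hbN, natCast_zmod_val]

end ZMod

def primitivePairs (R : Type*) [CommSemiring R] : Set (R × R) := {x | IsCoprime x.1 x.2}

theorem card_primitivePairs_congr {R S : Type*} [CommSemiring R] [CommSemiring S]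
    (e : R ≃+* S) : Nat.card (primitivePairs R) = Nat.card (primitivePairs S) :=
  Nat.card_congr <| (e.toEquiv.prodCongr e.toEquiv).subtypeEquiv fun _ =>
    e.isCoprime_map_iff.symm

theorem card_primitivePairs_prod {R S : Type*} [CommSemiring R] [CommSemiring S] :
    Nat.card (primitivePairs (R × S)) =
      Nat.card (primitivePairs R) * Nat.card (primitivePairs S) := by
  rw [← Nat.card_prod]
  exact Nat.card_congr <| ((Equiv.prodProdProdComm R S R S).subtypeEquiv fun _ =>
    Prod.isCoprime_iff).trans Equiv.subtypeProdEquivProd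

theorem card_primitivePairs_add_sq_card_nonunits {R : Type*} [CommRing R] [IsLocalRing R]
    [Finite R] : Nat.card (primitivePairs R) + Nat.card (nonunits R) ^ 2 = Nat.card R ^ 2 := by
  have hcompl : (primitivePairs R)ᶜ = nonunits R ×ˢ nonunits R := by
    ext x
    simp [primitivePairs, IsLocalRing.isCoprime_iff, mem_nonunits_iff]
  rw [sq, sq, ← Nat.card_prod (nonunits R), ← Nat.card_prod R,
    ← Set.ncard_add_ncard_compl (primitivePairs R), hcompl, Set.ncard_prod,
    Nat.card_prod, Nat.card_coe_set_eq, Nat.card_coe_set_eq]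

theorem card_primitivePairs_zmod_mul {m n : ℕ} (h : m.Coprime n) :
    Nat.card (primitivePairs (ZMod (m * n))) =
      Nat.card (primitivePairs (ZMod m)) * Nat.card (primitivePairs (ZMod n)) :=
  (card_primitivePairs_congr (ZMod.chineseRemainder h)).trans card_primitivePairs_prod

theorem card_primitivePairs_zmod_prime_pow {p k : ℕ} (hp : p.Prime) (hk : k ≠ 0) :
    (Nat.card (primitivePairs (ZMod (p ^ k))) : ℚ) =
      ((p : ℚ) ^ k) ^ 2 * (1 - (p : ℚ)⁻¹ ^ 2) := by
  have : Fact p.Prime := ⟨hp⟩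
  have : NeZero k := ⟨hk⟩
  have hcount := card_primitivePairs_add_sq_card_nonunits (R := ZMod (p ^ k))
  rw [ZMod.card_nonunits_prime_pow hp hk, Nat.card_zmod] at hcount
  have hcountℚ : (Nat.card (primitivePairs (ZMod (p ^ k))) : ℚ) + ((p : ℚ) ^ (k - 1)) ^ 2 =
      ((p : ℚ) ^ k) ^ 2 := by
    exact_mod_cast hcount
  have hp0 : (p : ℚ) ≠ 0 := by exact_mod_cast hp.ne_zero
  have hpow : (p : ℚ) ^ k = p ^ (k - 1) * p := by
    rw [← pow_succ, Nat.sub_add_cancel (Nat.one_le_iff_ne_zero.2 hk)]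
  rw [hpow] at hcountℚ ⊢
  field_simp
  linear_combination hcountℚ

theorem card_primitivePairs_zmod {N : ℕ} (hN : N ≠ 0) :
    (Nat.card (primitivePairs (ZMod N)) : ℚ) =
      N ^ 2 * ∏ p ∈ N.primeFactors, (1 - (p : ℚ)⁻¹ ^ 2) := by
  set density : ℕ → ℚ := fun n => Nat.card (primitivePairs (ZMod n)) / (n : ℚ) ^ 2
    with hdensity
  have hmul : ∀ m n, m.Coprime n → density (m * n) = density m * density n := by
    intro m n h
    simp only [hdensity, card_primitivePairs_zmod_mul h]
    push_cast
    rw [mul_pow, div_mul_div_comm]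
  have hone : density 1 = 1 := by
    have : Nat.card (primitivePairs (ZMod 1)) = 1 :=
      Nat.card_eq_one_iff_unique.2 ⟨inferInstance, ⟨⟨0, 0, 0, Subsingleton.elim _ _⟩⟩⟩
    simp only [hdensity, this, Nat.cast_one, one_pow, div_one]
  have hprod := Nat.multiplicative_factorization density hmul hone hN
  rw [Nat.prod_factorization_eq_prod_primeFactors] at hprod
  rw [← div_mul_cancel₀ (Nat.card (primitivePairs (ZMod N)) : ℚ) (by positivity : (N : ℚ) ^ 2 ≠ 0),
    mul_comm]
  congr 1
  refine hprod.trans (Finset.prod_congr rfl fun p hp => ?_)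
  simp only [hdensity]
  rw [card_primitivePairs_zmod_prime_pow (Nat.prime_of_mem_primeFactors hp)
    (Finsupp.mem_support_iff.1 (N.support_factorization ▸ hp))]
  push_cast
  field_simp

namespace CongruenceSubgroup

variable {N : ℕ}

theorem mem_Gamma0_iff_dvd {γ : SL(2, ℤ)} : γ ∈ Gamma0 N ↔ (N : ℤ) ∣ γ 1 0 :=
  Gamma0_mem.trans (ZMod.intCast_zmod_eq_zero_iff_dvd _ N)

theorem Gamma0_diag_mul_eq_one {γ : SL(2, ℤ)} (hγ : γ ∈ Gamma0 N) :
    (γ 0 0 : ZMod N) * (γ 1 1 : ZMod N) = 1 := by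
  have hdet := congrArg (Int.cast : ℤ → ZMod N) γ.det_coe
  rw [Matrix.det_fin_two] at hdet
  push_cast at hdet
  rwa [Gamma0_mem.1 hγ, mul_zero, sub_zero] at hdet

instance : MulAction SL(2, ℤ) (Fin 2 → ZMod N) :=
  MulAction.compHom _ (Matrix.SpecialLinearGroup.map (Int.castRingHom (ZMod N)))

theorem smul_single_zero (γ : SL(2, ℤ)) :
    γ • (Pi.single 0 1 : Fin 2 → ZMod N) = ![(γ 0 0 : ZMod N), (γ 1 0 : ZMod N)] := by
  change (Matrix.SpecialLinearGroup.map (Int.castRingHom (ZMod N)) γ).1.mulVec (Pi.single 0 1) = _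
  rw [Matrix.mulVec_single_one]
  ext i
  fin_cases i <;> rfl

theorem stabilizer_single_zero :
    MulAction.stabilizer SL(2, ℤ) (Pi.single 0 1 : Fin 2 → ZMod N) = Gamma1 N := by
  ext γ
  rw [MulAction.mem_stabilizer_iff, smul_single_zero, Gamma1_mem, funext_iff, Fin.forall_fin_two]
  simp only [Matrix.cons_val_zero, Matrix.cons_val_one, Pi.single_eq_same,
    Pi.single_eq_of_ne one_ne_zero]
  constructor
  · rintro ⟨ha, hc⟩
    refine ⟨ha, ?_, hc⟩
    simpa [ha] using Gamma0_diag_mul_eq_one (Gamma0_mem.2 hc)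
  · rintro ⟨ha, -, hc⟩
    exact ⟨ha, hc⟩

theorem orbit_single_zero [NeZero N] :
    MulAction.orbit SL(2, ℤ) (Pi.single 0 1 : Fin 2 → ZMod N) = {v | IsCoprime (v 0) (v 1)} := by
  ext v
  rw [MulAction.mem_orbit_iff, Set.mem_ofPred_eq]
  constructor
  · rintro ⟨γ, rfl⟩
    rw [smul_single_zero]
    exact (γ.isCoprime_col 0).intCast
  · intro hv
    obtain ⟨a, c, ⟨x, y, hxy⟩, ha, hc⟩ := ZMod.exists_isCoprime_intCast_eq hv
    refine ⟨(⟨!![a, -y; c, x], by simp [Matrix.det_fin_two]; linear_combination hxy⟩ : SL(2, ℤ)),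
      (smul_single_zero _).trans ?_⟩
    ext i
    fin_cases i
    · exact ha
    · exact hc

theorem index_Gamma1 [NeZero N] : (Gamma1 N).index = Nat.card (primitivePairs (ZMod N)) := by
  rw [← stabilizer_single_zero, MulAction.index_stabilizer, orbit_single_zero,
    ← Nat.card_coe_set_eq]
  exact Nat.card_congr ((finTwoArrowEquiv _).subtypeEquiv fun _ => Iff.rfl)

theorem Gamma0Map_toHomUnits_surjective [NeZero N] :
    Function.Surjective (Gamma0Map N).toHomUnits := by
  intro u
  have hv : ![(↑u⁻¹ : ZMod N), 0] ∈ MulAction.orbit SL(2, ℤ) (Pi.single 0 1 : Fin 2 → ZMod N) := by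
    rw [orbit_single_zero]
    exact isCoprime_zero_right.2 (u⁻¹).isUnit
  obtain ⟨γ, hγ⟩ := MulAction.mem_orbit_iff.1 hv
  rw [smul_single_zero] at hγ
  have hmem : γ ∈ Gamma0 N := Gamma0_mem.2 (congrFun hγ 1)
  have ha : (γ 0 0 : ZMod N) = ↑u⁻¹ := congrFun hγ 0
  have hdiag := Gamma0_diag_mul_eq_one hmem
  rw [ha] at hdiag
  exact ⟨⟨γ, hmem⟩, Units.ext (Units.inv_mul_eq_one.1 hdiag).symm⟩

theorem relIndex_Gamma1_Gamma0 [NeZero N] : (Gamma1 N).relIndex (Gamma0 N) = N.totient := by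
  have hker : (Gamma1 N).subgroupOf (Gamma0 N) = (Gamma0Map N).toHomUnits.ker := by
    ext γ
    rw [Subgroup.mem_subgroupOf, Gamma1_mem, MonoidHom.ker_toHomUnits, ← Gamma1',
      Gamma1_to_Gamma0_mem]
  rw [Subgroup.relIndex, hker, Subgroup.index_ker,
    MonoidHom.range_eq_top.2 Gamma0Map_toHomUnits_surjective, Subgroup.card_top,
    Nat.card_eq_fintype_card, ZMod.card_units_eq_totient]

theorem totient_mul_index_Gamma0 [NeZero N] :
    N.totient * (Gamma0 N).index = Nat.card (primitivePairs (ZMod N)) := by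
  rw [← relIndex_Gamma1_Gamma0, Subgroup.relIndex_mul_index (Gamma1_in_Gamma0 N), index_Gamma1]

end CongruenceSubgroup

theorem gamma0_membership_and_index (N : ℕ) (hN : 0 < N) :
    (∀ γ : SL(2, ℤ), γ ∈ Gamma0 N ↔ (N : ℤ) ∣ ((γ : Matrix (Fin 2) (Fin 2) ℤ) 1 0)) ∧
    ((Gamma0 N).index : ℚ) = N * ∏ p ∈ N.primeFactors, (1 + (p : ℚ)⁻¹) := by
  have : NeZero N := ⟨hN.ne'⟩
  refine ⟨fun γ => mem_Gamma0_iff_dvd, ?_⟩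
  have hφ : (N.totient : ℚ) ≠ 0 := by exact_mod_cast (Nat.totient_pos.2 hN).ne'
  have hcount : (N.totient : ℚ) * (Gamma0 N).index = Nat.card (primitivePairs (ZMod N)) := by
    exact_mod_cast totient_mul_index_Gamma0
  refine mul_left_cancel₀ hφ (hcount.trans ?_)
  rw [card_primitivePairs_zmod hN.ne', Nat.totient_eq_mul_prod_factors, mul_mul_mul_comm, ← sq,
    ← Finset.prod_mul_distrib]
  congr 1
  exact Finset.prod_congr rfl fun p _ => by ring
end

section
/- Let N be a positive integer and e an exact divisor of N (i.e. e ∣ N and gcd(e, N/e) = 1). If W is any integer matrix of the form (a·e, b; c·N, d·e) with determinant e, then conjugation by W (as an element of GL₂(ℚ)) maps Γ₀(N) into itself; i.e. for every γ ∈ Γ₀(N), the matrix W γ W⁻¹ lies in Γ₀(N). -/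
/-!
Since `e ∣ N` and `det W = e`, `W = g · diag(e, 1)` with `g = (a, b; c·(N/e), d·e) ∈ SL₂(ℤ)`.
Conjugation by `diag(e, 1)` sends `(p, q; r, s) ∈ Γ₀(N)` to `(p, e·q; r/e, s)`, again in `SL₂(ℤ)`,
so `W γ W⁻¹ = g (p, e·q; r/e, s) g⁻¹` is in `SL₂(ℤ)`. Its lower left entry is visibly a
multiple of `e · (N/e) = N`.
-/

open CongruenceSubgroup MatrixGroups Matrix

namespace AtkinLehner

variable {R : Type*} [CommRing R]

theorem eq_mul_mul_inv_of_mul_eq {n : Type*} [Fintype n] [DecidableEq n] {A B C : Matrix n n R}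
    (hA : IsUnit A.det) (h : C * A = A * B) : C = A * B * A⁻¹ := by
  rw [← h, mul_nonsing_inv_cancel_right _ _ hA]

theorem coe_conj_mul_coe_mul {n m : Type*} [Fintype n] [DecidableEq n]
    (g y : SpecialLinearGroup n R) (M : Matrix n m R) :
    ((g * y * g⁻¹ : SpecialLinearGroup n R) : Matrix n n R) * ((g : Matrix n n R) * M) =
      (g : Matrix n n R) * ((y : Matrix n n R) * M) := by
  simp [Matrix.mul_assoc, ← Matrix.mul_assoc (adjugate _), adjugate_mul, g.2]

theorem SL2_conj_apply_one_zero (g x : SL(2, R)) :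
    (g * x * g⁻¹) 1 0 =
      g 1 0 * g 1 1 * (x 0 0 - x 1 1) + g 1 1 ^ 2 * x 1 0 - g 1 0 ^ 2 * x 0 1 := by
  simp [mul_apply, Fin.sum_univ_two, adjugate_fin_two]
  ring

def mkSL2 (p q r s : R) (h : p * s - q * r = 1) : SL(2, R) :=
  ⟨!![p, q; r, s], by rwa [det_fin_two_of]⟩

def diagConj (x : SL(2, R)) (e t : R) (h : x 1 0 = e * t) : SL(2, R) :=
  mkSL2 (x 0 0) (e * x 0 1) t (x 1 1) <| by
    have hx := x.2
    rw [det_fin_two, h] at hx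
    linear_combination hx

theorem diagConj_mul_diag (x : SL(2, R)) (e t : R) (h : x 1 0 = e * t) :
    (diagConj x e t h : Matrix (Fin 2) (Fin 2) R) * !![e, 0; 0, 1] = !![e, 0; 0, 1] * x := by
  rw [eta_fin_two (x : Matrix (Fin 2) (Fin 2) R), h]
  simp [diagConj, mkSL2, mul_comm]

theorem det_atkinLehner (a b c d e m : R) :
    !![a * e, b; c * (e * m), d * e].det = e * (a * (d * e) - b * (c * m)) := by
  rw [det_fin_two_of]
  ring

theorem atkinLehner_eq_mul_diag (a b c d e m : R) :
    !![a * e, b; c * (e * m), d * e] = !![a, b; c * m, d * e] * !![e, 0; 0, 1] := by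
  simp
  ring

end AtkinLehner

open AtkinLehner in
theorem atkinLehner_conjugation_preserves_Gamma0_general
    (N e : ℕ) (hN : 0 < N) (he : e ∣ N)
    (a b c d : ℤ)
    (W : Matrix (Fin 2) (Fin 2) ℚ)
    (hW : W = !![(a * e : ℤ), (b : ℤ); (c * N : ℤ), (d * e : ℤ)].map (fun x => (x : ℚ)))
    (hdet : W.det = (e : ℚ))
    (γ : SL(2, ℤ)) (hγ : γ ∈ Gamma0 N) :
    ∃ δ : SL(2, ℤ), δ ∈ Gamma0 N ∧
      ((δ : Matrix (Fin 2) (Fin 2) ℤ).map (fun x => (x : ℚ)))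
        = W * ((γ : Matrix (Fin 2) (Fin 2) ℤ).map (fun x => (x : ℚ))) * W⁻¹ := by
  obtain ⟨m, rfl⟩ := he
  have he0 : e ≠ 0 := (Nat.pos_of_mul_pos_right hN).ne'
  set Wℤ : Matrix (Fin 2) (Fin 2) ℤ := !![a * e, b; c * (e * m), d * e]
  replace hW : W = Wℤ.map (fun x => (x : ℚ)) := by rw [hW]; push_cast; rfl
  have hg : a * (d * e) - b * (c * m) = 1 := by
    rw [hW, ← Int.cast_det, det_atkinLehner] at hdet
    exact (mul_eq_left₀ (Int.natCast_ne_zero.2 he0)).1 (by exact_mod_cast hdet)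
  obtain ⟨k, hk⟩ : ((e * m : ℕ) : ℤ) ∣ γ 1 0 :=
    (ZMod.intCast_zmod_eq_zero_iff_dvd _ _).1 (Gamma0_mem.1 hγ)
  rw [Nat.cast_mul, mul_assoc] at hk
  let g : SL(2, ℤ) := mkSL2 a b (c * m) (d * e) hg
  let γ₁ := diagConj γ e (m * k) hk
  refine ⟨g * γ₁ * g⁻¹, ?_, ?_⟩
  · rw [Gamma0_mem, SL2_conj_apply_one_zero, ZMod.intCast_zmod_eq_zero_iff_dvd]
    refine ⟨c * d * (γ 0 0 - γ 1 1) + d ^ 2 * e * k - c ^ 2 * m * γ 0 1, ?_⟩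
    simp only [g, γ₁, diagConj, mkSL2, Nat.cast_mul, of_apply, cons_val', cons_val_zero,
      cons_val_one, cons_val_fin_one]
    ring
  · have hWg : Wℤ = g * !![(e : ℤ), 0; 0, 1] := atkinLehner_eq_mul_diag ..
    have hconj : (g * γ₁ * g⁻¹ : SL(2, ℤ)) * Wℤ = Wℤ * γ := by
      rw [hWg, mul_assoc (g : Matrix (Fin 2) (Fin 2) ℤ), ← diagConj_mul_diag γ _ _ hk]
      exact coe_conj_mul_coe_mul g γ₁ _
    refine eq_mul_mul_inv_of_mul_eq (by simp [hdet, he0]) ?_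
    have hconjℚ := congrArg (Int.castRingHom ℚ).mapMatrix hconj
    simp only [map_mul, RingHom.mapMatrix_apply, Int.coe_castRingHom] at hconjℚ
    rwa [hW]

/-- Conjugation by an Atkin–Lehner matrix `W = (a·e, b; c·N, d·e)` of determinant `e`
(for an exact divisor `e` of `N`) maps `Γ₀(N)` into itself. -/
theorem atkinLehner_conjugation_preserves_Gamma0
    (N e : ℕ) (hN : 0 < N) (he : e ∣ N) (hexact : Nat.Coprime e (N / e))
    (a b c d : ℤ)
    (W : Matrix (Fin 2) (Fin 2) ℚ)
    (hW : W = !![(a * e : ℤ), (b : ℤ); (c * N : ℤ), (d * e : ℤ)].map (fun x => (x : ℚ)))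
    (hdet : W.det = (e : ℚ))
    (γ : SL(2, ℤ)) (hγ : γ ∈ Gamma0 N) :
    ∃ δ : SL(2, ℤ), δ ∈ Gamma0 N ∧
      ((δ : Matrix (Fin 2) (Fin 2) ℤ).map (fun x => (x : ℚ)))
        = W * ((γ : Matrix (Fin 2) (Fin 2) ℤ).map (fun x => (x : ℚ))) * W⁻¹ :=
  atkinLehner_conjugation_preserves_Gamma0_general N e hN he a b c d W hW hdet γ hγ
end

section
/- Jacobi's identity for theta constants: for every τ in the complex upper half-plane, θ₃(τ)⁴ = θ₂(τ)⁴ + θ₄(τ)⁴, where θ₂(τ) = Σ_{n∈ℤ} q^{(n+1/2)²/2}, θ₃(τ) = Σ_{n∈ℤ} q^{n²/2}, θ₄(τ) = Σ_{n∈ℤ} (−1)ⁿ q^{n²/2}, and q = e^{2πiτ}. -/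
open Complex

/-- The Jacobi theta constant `θ₂(τ) = Σ_{n∈ℤ} q^{(n+1/2)²/2}`, `q = e^{2πiτ}`. -/
noncomputable def jacobiTheta2 (τ : ℂ) : ℂ :=
  ∑' n : ℤ, Complex.exp (2 * Real.pi * I * τ * (((n : ℂ) + 1/2) ^ 2 / 2))

/-- The Jacobi theta constant `θ₃(τ) = Σ_{n∈ℤ} q^{n²/2}`. -/
noncomputable def jacobiTheta3 (τ : ℂ) : ℂ :=
  ∑' n : ℤ, Complex.exp (2 * Real.pi * I * τ * ((n : ℂ) ^ 2 / 2))

/-- The Jacobi theta constant `θ₄(τ) = Σ_{n∈ℤ} (−1)ⁿ q^{n²/2}`. -/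
noncomputable def jacobiTheta4 (τ : ℂ) : ℂ :=
  ∑' n : ℤ, (-1 : ℂ) ^ n * Complex.exp (2 * Real.pi * I * τ * ((n : ℂ) ^ 2 / 2))

/- ## Auxiliary definitions for the proof -/

/-- Normalized θ₃-summand. -/
noncomputable def jtF (τ : ℂ) (n : ℤ) : ℂ := Complex.exp ((Real.pi : ℂ) * I * τ * (n : ℂ) ^ 2)

/-- Normalized θ₂-summand. -/
noncomputable def jtG (τ : ℂ) (n : ℤ) : ℂ :=
  Complex.exp ((Real.pi : ℂ) * I * τ * (2 * (n : ℂ) + 1) ^ 2 / 4)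

/-- Product of four copies of a summand, over a quadruple index. -/
noncomputable def jtP (h : ℤ → ℂ) (v : ℤ × ℤ × ℤ × ℤ) : ℂ :=
  h v.1 * (h v.2.1 * (h v.2.2.1 * h v.2.2.2))

/-- Sum of the four coordinates. -/
def jtS (v : ℤ × ℤ × ℤ × ℤ) : ℤ := v.1 + v.2.1 + v.2.2.1 + v.2.2.2

/-- Parametrization of quadruples with odd coordinate sum. -/
def jtψ (v : ℤ × ℤ × ℤ × ℤ) : ℤ × ℤ × ℤ × ℤ :=
  (v.1, v.2.1, v.2.2.1, 2 * v.2.2.2 + 1 - v.1 - v.2.1 - v.2.2.1)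

/-- The two branches of the Hadamard-type bijection. -/
def jtΦ (s : Bool) (v : ℤ × ℤ × ℤ × ℤ) : ℤ × ℤ × ℤ × ℤ :=
  ((if s then -v.2.2.2 - 1 else v.2.2.2), v.1 + v.2.1 - v.2.2.2 - 1,
    v.1 + v.2.2.1 - v.2.2.2 - 1, v.2.2.2 - v.2.1 - v.2.2.1)

lemma jt_tsum_pow_four {f : ℤ → ℂ} (hf : Summable fun n => ‖f n‖) :
    (∑' n : ℤ, f n) ^ 4 = ∑' v : ℤ × ℤ × ℤ × ℤ, jtP f v := by
  have h2 : Summable fun p : ℤ × ℤ => ‖f p.1 * f p.2‖ := hf.mul_norm hf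
  have h3 : Summable fun p : ℤ × ℤ × ℤ => ‖f p.1 * (f p.2.1 * f p.2.2)‖ :=
    Summable.mul_norm (g := fun p : ℤ × ℤ => f p.1 * f p.2) hf h2
  have e1 : (∑' n : ℤ, f n) * (∑' n : ℤ, f n) = ∑' p : ℤ × ℤ, f p.1 * f p.2 :=
    tsum_mul_tsum_of_summable_norm hf hf
  have e2 : (∑' n : ℤ, f n) * (∑' p : ℤ × ℤ, f p.1 * f p.2)
      = ∑' p : ℤ × ℤ × ℤ, f p.1 * (f p.2.1 * f p.2.2) :=
    tsum_mul_tsum_of_summable_norm (g := fun p : ℤ × ℤ => f p.1 * f p.2) hf h2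
  have e3 : (∑' n : ℤ, f n) * (∑' p : ℤ × ℤ × ℤ, f p.1 * (f p.2.1 * f p.2.2))
      = ∑' v : ℤ × ℤ × ℤ × ℤ, f v.1 * (f v.2.1 * (f v.2.2.1 * f v.2.2.2)) :=
    tsum_mul_tsum_of_summable_norm (g := fun p : ℤ × ℤ × ℤ => f p.1 * (f p.2.1 * f p.2.2)) hf h3
  calc (∑' n : ℤ, f n) ^ 4
      = (∑' n : ℤ, f n) * ((∑' n : ℤ, f n) * ((∑' n : ℤ, f n) * (∑' n : ℤ, f n))) := by ring
    _ = ∑' v : ℤ × ℤ × ℤ × ℤ, jtP f v := by rw [e1, e2, e3]; rfl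

/-- Jacobi's identity: `θ₃⁴ = θ₂⁴ + θ₄⁴` on the upper half-plane. -/
theorem jacobi_identity (τ : ℂ) (hτ : 0 < τ.im) :
    jacobiTheta3 τ ^ 4 = jacobiTheta2 τ ^ 4 + jacobiTheta4 τ ^ 4 := by
  -- rewrite the three theta constants using normalized summands
  have e3 : jacobiTheta3 τ = ∑' n : ℤ, jtF τ n := by
    unfold jacobiTheta3 jtF; exact tsum_congr fun n => by congr 1; ring
  have e4 : jacobiTheta4 τ = ∑' n : ℤ, (-1 : ℂ) ^ n * jtF τ n := by
    unfold jacobiTheta4 jtF; exact tsum_congr fun n => by congr 2; ring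
  have e2 : jacobiTheta2 τ = ∑' n : ℤ, jtG τ n := by
    unfold jacobiTheta2 jtG; exact tsum_congr fun n => by congr 1; ring
  -- summability
  have h1 : Summable (jtF τ) := by
    refine ((summable_jacobiTheta₂_term_iff 0 τ).mpr hτ).congr fun n => ?_
    unfold jacobiTheta₂_term jtF; congr 1; ring
  have h2 : Summable (jtG τ) := by
    have h := (((summable_jacobiTheta₂_term_iff (τ/2) τ).mpr hτ).mul_left
      (Complex.exp ((Real.pi : ℂ) * I * τ / 4)))
    refine h.congr fun n => ?_
    unfold jacobiTheta₂_term jtG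
    rw [← Complex.exp_add]; congr 1; ring
  have hn1 : Summable fun n => ‖jtF τ n‖ := summable_norm_iff.mpr h1
  have hn2 : Summable fun n => ‖jtG τ n‖ := summable_norm_iff.mpr h2
  have hn4 : Summable fun n => ‖(-1 : ℂ) ^ n * jtF τ n‖ := by
    refine hn1.congr fun n => ?_
    rw [norm_mul, norm_zpow, norm_neg, norm_one, one_zpow, one_mul]
  -- expand the fourth powers
  rw [e2, e3, e4, jt_tsum_pow_four hn1, jt_tsum_pow_four hn2, jt_tsum_pow_four hn4]
  -- quadruple summabilities
  have hPF2 : Summable fun p : ℤ × ℤ => ‖jtF τ p.1 * jtF τ p.2‖ := hn1.mul_norm hn1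
  have hPF3 : Summable fun p : ℤ × ℤ × ℤ => ‖jtF τ p.1 * (jtF τ p.2.1 * jtF τ p.2.2)‖ :=
    Summable.mul_norm (g := fun p : ℤ × ℤ => jtF τ p.1 * jtF τ p.2) hn1 hPF2
  have hPF : Summable fun v : ℤ × ℤ × ℤ × ℤ => ‖jtP (jtF τ) v‖ :=
    Summable.mul_norm (g := fun p : ℤ × ℤ × ℤ => jtF τ p.1 * (jtF τ p.2.1 * jtF τ p.2.2))
      hn1 hPF3
  have hFsum : Summable (jtP (jtF τ)) := hPF.of_norm
  -- injectivity facts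
  have hψinj : Function.Injective jtψ := by
    rintro ⟨a, b, c, k⟩ ⟨a', b', c', k'⟩ h
    simp only [jtψ, Prod.ext_iff] at h ⊢
    omega
  have hΦinj : ∀ s, Function.Injective (jtΦ s) := by
    rintro s ⟨a, b, c, k⟩ ⟨a', b', c', k'⟩ h
    simp only [jtΦ, Prod.ext_iff] at h ⊢
    cases s <;> simp only [Bool.false_eq_true, if_false, if_true] at h <;> omega
  -- the key exponential identity
  have hkey : ∀ s u, jtP (jtG τ) (jtΦ s u) = jtP (jtF τ) (jtψ u) := by
    rintro s ⟨a, b, c, k⟩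
    simp only [jtP, jtΦ, jtψ, jtG, jtF, ← Complex.exp_add]
    congr 1
    cases s <;> simp only [Bool.false_eq_true, if_false, if_true] <;> push_cast <;> ring
  -- basic sums
  set S := ∑' w : ℤ × ℤ × ℤ × ℤ, jtP (jtF τ) (jtψ w) with hSdef
  have hS : HasSum (fun w => jtP (jtF τ) (jtψ w)) S :=
    (hFsum.comp_injective hψinj).hasSum
  -- θ₂ side: sum over even/odd coordinate-sum pieces
  have hEvenSurj : ∀ v : ℤ × ℤ × ℤ × ℤ, Even (jtS v) → v ∈ Set.range (jtΦ false) := by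
    rintro ⟨m1, m2, m3, m4⟩ hev
    simp only [jtS] at hev
    rw [Int.even_iff] at hev
    refine ⟨⟨(m1 + m2 + m3 + m4 + 2) / 2,
      m2 - (m1 + m2 + m3 + m4 + 2) / 2 + m1 + 1,
      m3 - (m1 + m2 + m3 + m4 + 2) / 2 + m1 + 1, m1⟩, ?_⟩
    simp only [jtΦ, Bool.false_eq_true, if_false, Prod.ext_iff, true_and, and_true]
    omega
  have hOddSurj : ∀ v : ℤ × ℤ × ℤ × ℤ, ¬ Even (jtS v) → v ∈ Set.range (jtΦ true) := by
    rintro ⟨m1, m2, m3, m4⟩ hodd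
    simp only [jtS] at hodd
    rw [Int.even_iff] at hodd
    refine ⟨⟨(m2 + m3 + m4 - m1 + 1) / 2,
      m2 - m1 - (m2 + m3 + m4 - m1 + 1) / 2,
      m3 - m1 - (m2 + m3 + m4 - m1 + 1) / 2, -m1 - 1⟩, ?_⟩
    simp only [jtΦ, if_true, Prod.ext_iff, true_and, and_true]
    omega
  have hΦfalseS : ∀ u, Even (jtS (jtΦ false u)) := by
    rintro ⟨a, b, c, k⟩
    simp only [jtΦ, jtS, Bool.false_eq_true, if_false]
    refine ⟨a - 1, by ring⟩
  have hΦtrueS : ∀ u, ¬ Even (jtS (jtΦ true u)) := by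
    rintro ⟨a, b, c, k⟩
    simp only [jtΦ, jtS, if_true, Int.even_iff]
    omega
  have hG0 : HasSum (fun v => if Even (jtS v) then jtP (jtG τ) v else 0) S := by
    rw [← (hΦinj false).hasSum_iff (f := fun v => if Even (jtS v) then jtP (jtG τ) v else 0)
      (fun v hv => if_neg fun hev => hv (hEvenSurj v hev))]
    refine hS.congr_fun fun u => ?_
    simp only [Function.comp_apply, if_pos (hΦfalseS u), hkey false u]
  have hG1 : HasSum (fun v => if Even (jtS v) then 0 else jtP (jtG τ) v) S := by
    rw [← (hΦinj true).hasSum_iff (f := fun v => if Even (jtS v) then 0 else jtP (jtG τ) v)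
      (fun v hv => by
        by_cases hev : Even (jtS v)
        · exact if_pos hev
        · exact absurd (hOddSurj v hev) hv)]
    refine hS.congr_fun fun u => ?_
    simp only [Function.comp_apply, if_neg (hΦtrueS u), hkey true u]
  have hG : HasSum (jtP (jtG τ)) (S + S) := by
    have := hG0.add hG1
    refine this.congr_fun fun v => ?_
    by_cases hev : Even (jtS v) <;> simp [hev]
  -- θ₃ − θ₄ side
  have hψS : ∀ w, Odd (jtS (jtψ w)) := by
    rintro ⟨a, b, c, k⟩
    exact ⟨k, by simp only [jtψ, jtS]; ring⟩
  have hψrange : ∀ v : ℤ × ℤ × ℤ × ℤ, Odd (jtS v) → v ∈ Set.range jtψ := by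
    rintro ⟨a, b, c, d⟩ hodd
    simp only [jtS] at hodd
    rw [Int.odd_iff] at hodd
    refine ⟨⟨a, b, c, (d + a + b + c - 1) / 2⟩, ?_⟩
    simp only [jtψ, Prod.ext_iff, true_and, and_true]
    omega
  have hOddSum : HasSum (fun v => (1 - (-1 : ℂ) ^ (jtS v)) * jtP (jtF τ) v) (S + S) := by
    rw [← hψinj.hasSum_iff (f := fun v => (1 - (-1 : ℂ) ^ (jtS v)) * jtP (jtF τ) v)
      (fun v hv => by
        have he : Even (jtS v) :=
          (Int.even_or_odd (jtS v)).resolve_right fun ho => hv (hψrange v ho)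
        show (1 - (-1 : ℂ) ^ jtS v) * jtP (jtF τ) v = 0
        rw [he.neg_one_zpow, sub_self, zero_mul])]
    have h2S : HasSum (fun w => 2 * jtP (jtF τ) (jtψ w)) (S + S) := by
      simpa [two_mul] using hS.add hS
    refine h2S.congr_fun fun w => ?_
    simp only [Function.comp_apply, (hψS w).neg_one_zpow]
    ring
  -- put the pieces together
  have hF : HasSum (jtP (jtF τ)) (∑' v, jtP (jtF τ) v) := hFsum.hasSum
  have h4S : HasSum (fun v => (-1 : ℂ) ^ (jtS v) * jtP (jtF τ) v)
      ((∑' v, jtP (jtF τ) v) - (S + S)) := by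
    have := hF.sub hOddSum
    refine this.congr_fun fun v => ?_
    ring
  have e4' : (∑' v : ℤ × ℤ × ℤ × ℤ, jtP (fun n => (-1 : ℂ) ^ n * jtF τ n) v)
      = ∑' v : ℤ × ℤ × ℤ × ℤ, (-1 : ℂ) ^ (jtS v) * jtP (jtF τ) v := by
    refine tsum_congr fun v => ?_
    obtain ⟨a, b, c, d⟩ := v
    simp only [jtP, jtS]
    rw [zpow_add₀ (by norm_num : (-1 : ℂ) ≠ 0), zpow_add₀ (by norm_num : (-1 : ℂ) ≠ 0),
      zpow_add₀ (by norm_num : (-1 : ℂ) ≠ 0)]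
    ring
  rw [e4', hG.tsum_eq, h4S.tsum_eq]
  ring
end
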